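/- Let a multispindle X act on an R-module M, and for p ≥ 0 let F^p_n ⊂ CD_n(M;X) be the submodule generated by m⊗(x_n,…,x_0) with x_i = x_{i+1} for some i ≤ p. Then each F^p is a subcomplex of the degenerate complex CD(M;X) (for any multiterm distributive differential), F^p ⊆ F^{p+1}, and ⋃_p F^p = CD(M;X); i.e., the F^p form an exhaustive filtration of CD(M;X) by subcomplexes. -/

import Mathlib

/-!
`F^p_n` is the submodule of finitely supported functions carried by the set of sequences with a
repetition at a position `≤ p`, so monotonicity and exhaustion reduce to statements about these
sets. For the differential, a face `d_j` with `j ∉ {i, i+1}` moves a repetition at `i` to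
position `i` or `i - 1`, while `d_i` and `d_{i+1}` agree on it (by idempotence) and carry
opposite signs, so they cancel.
-/

def face {X : Type*} (op : X → X → X) {n : ℕ} (i : Fin (n+1)) (f : Fin (n+1) → X) :
    Fin n → X :=
  fun k => if (k : ℕ) < (i : ℕ) then f k.castSucc else op (f k.succ) (f i)

noncomputable def moduleFace {X : Type} (R : Type) [CommRing R] {M : Type}
    [AddCommGroup M] [Module R M] (op : X → X → X) (β : X → M →ₗ[R] M)
    {n : ℕ} (i : Fin (n+1)) :
    ((Fin (n+1) → X) →₀ M) →ₗ[R] ((Fin n → X) →₀ M) :=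
  Finsupp.lsum R fun f => (Finsupp.lsingle (face op i f)).comp (β (f i))

noncomputable def moduleDiff {X : Type} (R : Type) [CommRing R] {M : Type}
    [AddCommGroup M] [Module R M] {r : ℕ} (ops : Fin r → X → X → X)
    (act : Fin r → X → M →ₗ[R] M) (a : Fin r → R) (m : ℕ) :
    ((Fin (m+1) → X) →₀ M) →ₗ[R] ((Fin m → X) →₀ M) :=
  ∑ k, a k • ∑ i : Fin (m+1),
    ((-1 : R) ^ (m - (i : ℕ))) • moduleFace R (ops k) (act k) i

noncomputable def degenSub (X R : Type) [CommRing R] (M : Type) [AddCommGroup M] [Module R M]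
    (n : ℕ) : Submodule R ((Fin (n+1) → X) →₀ M) :=
  Submodule.span R {g | ∃ (f : Fin (n+1) → X) (m : M),
    g = Finsupp.single f m ∧ ∃ i : Fin n, f i.castSucc = f i.succ}

/-- `F^p_n ⊆ CD_n(M;X)`: the submodule generated by `m ⊗ (x_n,…,x_0)` with a repetition
`x_i = x_{i+1}` for some `i ≤ p`. -/
noncomputable def filtSub (X R : Type) [CommRing R] (M : Type) [AddCommGroup M] [Module R M]
    (p n : ℕ) : Submodule R ((Fin (n+1) → X) →₀ M) :=
  Submodule.span R {g | ∃ (f : Fin (n+1) → X) (m : M),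
    g = Finsupp.single f m ∧ ∃ i : Fin n, (i : ℕ) ≤ p ∧ f i.castSucc = f i.succ}

def repeatSet (X : Type*) (p n : ℕ) : Set (Fin (n+1) → X) :=
  {f | ∃ i : Fin n, (i : ℕ) ≤ p ∧ f i.castSucc = f i.succ}

lemma repeatSet_mono {X : Type*} {p q : ℕ} (hpq : p ≤ q) (n : ℕ) :
    repeatSet X p n ⊆ repeatSet X q n := by
  rintro f ⟨i, hip, hrep⟩
  exact ⟨i, hip.trans hpq, hrep⟩

lemma iUnion_repeatSet (X : Type*) (n : ℕ) :
    ⋃ p, repeatSet X p n = {f : Fin (n+1) → X | ∃ i : Fin n, f i.castSucc = f i.succ} := by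
  ext f
  simp only [repeatSet, Set.mem_iUnion, Set.mem_ofPred_eq]
  constructor
  · rintro ⟨p, i, -, hrep⟩
    exact ⟨i, hrep⟩
  · rintro ⟨i, hrep⟩
    exact ⟨i, i, le_rfl, hrep⟩

namespace Finsupp

lemma span_setOf_single_eq_supported {α : Type*} (R : Type*) [Semiring R] (M : Type*)
    [AddCommMonoid M] [Module R M] (s : Set α) :
    Submodule.span R {g | ∃ (a : α) (m : M), g = single a m ∧ a ∈ s} = supported M R s := by
  apply le_antisymm
  · rw [Submodule.span_le]
    rintro _ ⟨a, m, rfl, ha⟩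
    exact single_mem_supported R m ha
  · intro l hl
    rw [← l.sum_single]
    exact Submodule.sum_mem _ fun a ha =>
      Submodule.subset_span ⟨a, l a, rfl, (mem_supported R l).mp hl ha⟩

end Finsupp

lemma filtSub_eq_supported (X R : Type) [CommRing R] (M : Type) [AddCommGroup M] [Module R M]
    (p n : ℕ) : filtSub X R M p n = Finsupp.supported M R (repeatSet X p n) :=
  Finsupp.span_setOf_single_eq_supported R M (repeatSet X p n)

lemma degenSub_eq_supported (X R : Type) [CommRing R] (M : Type) [AddCommGroup M]
    [Module R M] (n : ℕ) : degenSub X R M n = Finsupp.supported M R (⋃ p, repeatSet X p n) := by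
  rw [iUnion_repeatSet]
  exact Finsupp.span_setOf_single_eq_supported R M _

section Faces

variable {X : Type*} (op : X → X → X) {n : ℕ}

lemma face_castSucc_eq_face_succ (hidem : ∀ x, op x x = x) (f : Fin (n+2) → X)
    (i : Fin (n+1)) (hrep : f i.castSucc = f i.succ) :
    face op i.castSucc f = face op i.succ f := by
  funext k
  unfold face
  simp only [Fin.val_castSucc, Fin.val_succ]
  rcases lt_trichotomy (k : ℕ) (i : ℕ) with h | h | h
  · rw [if_pos h, if_pos (by omega)]
  · rw [if_neg (by omega), if_pos (by omega)]
    have hk : k = i := Fin.ext h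
    rw [hk, ← hrep, hidem]
  · rw [if_neg (by omega), if_neg (by omega), hrep]

lemma face_mem_repeatSet {p : ℕ} {f : Fin (n+2) → X} (i : Fin (n+1)) (hip : (i : ℕ) ≤ p)
    (hrep : f i.castSucc = f i.succ) {j : Fin (n+2)} (hj₁ : j ≠ i.castSucc)
    (hj₂ : j ≠ i.succ) : face op j f ∈ repeatSet X p n := by
  rw [Ne, Fin.ext_iff, Fin.val_castSucc] at hj₁
  rw [Ne, Fin.ext_iff, Fin.val_succ] at hj₂
  have hi : (i : ℕ) ≤ n := Nat.lt_succ_iff.mp i.isLt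
  rcases Nat.lt_or_ge (j : ℕ) (i : ℕ) with hlt | hge
  · refine ⟨⟨(i : ℕ) - 1, by omega⟩, by simp only; omega, ?_⟩
    unfold face
    rw [if_neg (by simp; omega), if_neg (by simp; omega)]
    have h₁ : ((⟨(i : ℕ) - 1, by omega⟩ : Fin n).castSucc).succ = i.castSucc := by
      ext; simp; omega
    have h₂ : ((⟨(i : ℕ) - 1, by omega⟩ : Fin n).succ).succ = i.succ := by
      ext; simp; omega
    rw [h₁, h₂, hrep]
  · refine ⟨⟨(i : ℕ), by omega⟩, hip, ?_⟩
    unfold face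
    rw [if_pos (by simp; omega), if_pos (by simp; omega)]
    have h₁ : ((⟨(i : ℕ), by omega⟩ : Fin n).castSucc).castSucc = i.castSucc := by ext; simp
    have h₂ : ((⟨(i : ℕ), by omega⟩ : Fin n).succ).castSucc = i.succ := by ext; simp
    rw [h₁, h₂, hrep]

end Faces

section AlternatingFaces

variable {X : Type} (R : Type) [CommRing R] {M : Type} [AddCommGroup M] [Module R M]

noncomputable def alternatingFaceMap (op : X → X → X) (β : X → M →ₗ[R] M) (n : ℕ) :
    ((Fin (n+1) → X) →₀ M) →ₗ[R] ((Fin n → X) →₀ M) :=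
  ∑ i : Fin (n+1), ((-1 : R) ^ (n - (i : ℕ))) • moduleFace R op β i

lemma moduleDiff_eq_sum_alternatingFaceMap {r : ℕ} (ops : Fin r → X → X → X)
    (act : Fin r → X → M →ₗ[R] M) (a : Fin r → R) (n : ℕ) :
    moduleDiff R ops act a n = ∑ k, a k • alternatingFaceMap R (ops k) (act k) n :=
  rfl

lemma moduleFace_single (op : X → X → X) (β : X → M →ₗ[R] M) {n : ℕ} (i : Fin (n+1))
    (f : Fin (n+1) → X) (m : M) :
    moduleFace R op β i (Finsupp.single f m) = Finsupp.single (face op i f) (β (f i) m) := by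
  simp [moduleFace]

lemma alternatingFaceMap_single_mem_supported (op : X → X → X) (hidem : ∀ x, op x x = x)
    (β : X → M →ₗ[R] M) {p n : ℕ} {f : Fin (n+2) → X} (hf : f ∈ repeatSet X p (n+1)) (m : M) :
    alternatingFaceMap R op β (n+1) (Finsupp.single f m)
      ∈ Finsupp.supported M R (repeatSet X p n) := by
  obtain ⟨i, hip, hrep⟩ := hf
  have hne : i.castSucc ≠ i.succ := by simp [Fin.ext_iff]
  have hsign : ((-1 : R) ^ (n + 1 - (i.castSucc : ℕ)))
      = -((-1 : R) ^ (n + 1 - (i.succ : ℕ))) := by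
    have hi : (i : ℕ) ≤ n := Nat.lt_succ_iff.mp i.isLt
    rw [Fin.val_castSucc, Fin.val_succ, show n + 1 - i = (n + 1 - (i + 1)) + 1 by omega,
      pow_succ, mul_neg_one]
  have hcancel : ∑ j ∈ {i.castSucc, i.succ}, (-1 : R) ^ (n + 1 - (j : ℕ)) •
      Finsupp.single (face op j f) (β (f j) m) = 0 := by
    rw [Finset.sum_pair hne, face_castSucc_eq_face_succ op hidem f i hrep, hrep, hsign,
      neg_smul, neg_add_cancel]
  simp only [alternatingFaceMap, LinearMap.sum_apply, LinearMap.smul_apply, moduleFace_single]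
  rw [← Finset.sum_sdiff (Finset.subset_univ {i.castSucc, i.succ}), hcancel, add_zero]
  refine Submodule.sum_mem _ fun j hj => Submodule.smul_mem _ _ ?_
  simp only [Finset.mem_sdiff, Finset.mem_univ, Finset.mem_insert, Finset.mem_singleton,
    true_and, not_or] at hj
  exact Finsupp.single_mem_supported R _ (face_mem_repeatSet op i hip hrep hj.1 hj.2)

end AlternatingFaces

lemma map_moduleDiff_filtSub_le {X : Type} (R : Type) [CommRing R] (M : Type) [AddCommGroup M]
    [Module R M] {r : ℕ} (ops : Fin r → X → X → X) (hidem : ∀ (k : Fin r) (x : X), ops k x x = x)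
    (act : Fin r → X → (M →ₗ[R] M)) (a : Fin r → R) (p n : ℕ) :
    Submodule.map (moduleDiff R ops act a (n+1)) (filtSub X R M p (n+1)) ≤ filtSub X R M p n := by
  rw [Submodule.map_le_iff_le_comap, filtSub, Submodule.span_le, filtSub_eq_supported]
  rintro _ ⟨f, m, rfl, hf⟩
  simp only [SetLike.mem_coe, Submodule.mem_comap, moduleDiff_eq_sum_alternatingFaceMap,
    LinearMap.sum_apply, LinearMap.smul_apply]
  exact Submodule.sum_mem _ fun k _ => Submodule.smul_mem _ _
    (alternatingFaceMap_single_mem_supported R (ops k) (hidem k) (act k) hf m)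

theorem filtration_of_degenerate_complex_general
    {X : Type} (R : Type) [CommRing R] (M : Type) [AddCommGroup M] [Module R M]
    {r : ℕ} (ops : Fin r → X → X → X)
    (hidem : ∀ (k : Fin r) (x : X), ops k x x = x)
    (act : Fin r → X → (M →ₗ[R] M))
    (a : Fin r → R) :
    (∀ p n : ℕ, Submodule.map (moduleDiff R ops act a (n+1)) (filtSub X R M p (n+1))
        ≤ filtSub X R M p n)
    ∧ (∀ p n : ℕ, filtSub X R M p n ≤ filtSub X R M (p+1) n)
    ∧ (∀ n : ℕ, (⨆ p : ℕ, filtSub X R M p n) = degenSub X R M n) := by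
  refine ⟨map_moduleDiff_filtSub_le R M ops hidem act a, fun p n => ?_, fun n => ?_⟩
  · rw [filtSub_eq_supported, filtSub_eq_supported]
    exact Finsupp.supported_mono (repeatSet_mono p.le_succ n)
  · simp_rw [filtSub_eq_supported, degenSub_eq_supported, Finsupp.supported_iUnion]

/-- The submodules `F^p` form an exhaustive filtration of the degenerate complex
`CD(M;X)` by subcomplexes: each `F^p` is preserved by any multiterm distributive
differential, `F^p ⊆ F^{p+1}`, and `⋃_p F^p = CD(M;X)`. -/
theorem filtration_of_degenerate_complex
    {X : Type} (R : Type) [CommRing R] (M : Type) [AddCommGroup M] [Module R M]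
    {r : ℕ} (ops : Fin r → X → X → X)
    (hidem : ∀ (k : Fin r) (x : X), ops k x x = x)
    (hdistr : ∀ (i j : Fin r) (x y z : X),
      ops j (ops i x y) z = ops i (ops j x z) (ops j y z))
    (act : Fin r → X → (M →ₗ[R] M))
    (hact : ∀ (i j : Fin r) (x y : X) (m : M),
      act j y (act i x m) = act i (ops j x y) (act j y m))
    (a : Fin r → R) :
    (∀ p n : ℕ, Submodule.map (moduleDiff R ops act a (n+1)) (filtSub X R M p (n+1))
        ≤ filtSub X R M p n)
    ∧ (∀ p n : ℕ, filtSub X R M p n ≤ filtSub X R M (p+1) n)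
    ∧ (∀ n : ℕ, (⨆ p : ℕ, filtSub X R M p n) = degenSub X R M n) :=
  filtration_of_degenerate_complex_general R M ops hidem act a
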